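/- arXiv:0705.3028 — 6 statements merged into one kernel-verified Lean document; each statement's English description precedes it below -/
import Mathlib

section
/- Let F be a finite group (under composition) of measurable bijections of Ω, P a probability measure on 𝓑, and μ a regular conditional distribution for P given a sub-σ-field 𝓐. Define Q = (1/|F|) Σ_{f∈F} P ∘ f⁻¹ and ν(ω) = (1/|F|) Σ_{f∈F} μ(ω) ∘ f⁻¹. If 𝓐 = 𝓐_F := {B ∈ 𝓑 : f⁻¹B = B for all f ∈ F} is the F-invariant σ-field, then ν is a regular conditional distribution for Q given 𝓐. -/
open MeasureTheory MeasurableSpace Set Filter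
open scoped ENNReal

/-- A regular conditional distribution for `P` given the sub-σ-field `𝓐`. -/
def IsRCD {Ω : Type*} [m𝓑 : MeasurableSpace Ω] (𝓐 : MeasurableSpace Ω)
    (P : @Measure Ω m𝓑) (μ : Ω → @Measure Ω m𝓑) : Prop :=
  (∀ ω, IsProbabilityMeasure (μ ω)) ∧
  (∀ B : Set Ω, MeasurableSet[m𝓑] B → Measurable[𝓐] fun ω => μ ω B) ∧
  (∀ B : Set Ω, MeasurableSet[m𝓑] B → ∀ A : Set Ω, MeasurableSet[𝓐] A →
    ∫⁻ ω in A, μ ω B ∂P = P (A ∩ B))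


/-- The σ-field of sets invariant under every map in `F`. -/
def invariantSigma {Ω : Type*} [m𝓑 : MeasurableSpace Ω] (F : Set (Ω → Ω)) :
    MeasurableSpace Ω where
  MeasurableSet' B := MeasurableSet[m𝓑] B ∧ ∀ f ∈ F, f ⁻¹' B = B
  measurableSet_empty := ⟨MeasurableSet.empty, fun _ _ => Set.preimage_empty⟩
  measurableSet_compl := fun B hB => ⟨hB.1.compl, fun f hf => by
    rw [Set.preimage_compl, hB.2 f hf]⟩
  measurableSet_iUnion := fun s hs => ⟨MeasurableSet.iUnion fun i => (hs i).1,
    fun f hf => by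
      simp only [Set.preimage_iUnion]
      exact Set.iUnion_congr fun i => (hs i).2 f hf⟩

/-!
An `𝓐_F`-measurable function `h` satisfies `h ∘ f = h` for `f ∈ F`, since its level sets lie
in `𝓐_F`. So for `A ∈ 𝓐_F` the integrand `1_A · ν(·)(B)` is `F`-invariant, and its integral
against `Q` equals its integral against `P`. By the defining property of `μ` the latter is the
average over `f ∈ F` of `∫_A μ(·)(f⁻¹ B) dP = P(A ∩ f⁻¹ B) = P(f⁻¹(A ∩ B))`, that is `Q(A ∩ B)`.
-/

section

variable {Ω : Type*} [MeasurableSpace Ω]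

theorem invariantSigma_le (F : Set (Ω → Ω)) : invariantSigma F ≤ ‹MeasurableSpace Ω› :=
  fun _ hB => hB.1

theorem comp_eq_of_measurable_invariantSigma {β : Type*} [MeasurableSpace β]
    [MeasurableSingletonClass β] {F : Set (Ω → Ω)} {h : Ω → β}
    (hh : Measurable[invariantSigma F] h) {f : Ω → Ω} (hf : f ∈ F) : h ∘ f = h := by
  funext ω
  have hfiber := (hh (measurableSet_singleton (h ω))).2 f hf
  exact (Set.ext_iff.1 hfiber ω).2 rfl

end

namespace MeasureTheory.Measure

variable {Ω : Type*} [MeasurableSpace Ω]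

noncomputable def mapAvg (s : Finset (Ω → Ω)) (P : Measure Ω) : Measure Ω :=
  (s.card : ℝ≥0∞)⁻¹ • ∑ f ∈ s, P.map f

variable {s : Finset (Ω → Ω)}

theorem mapAvg_apply (hs : ∀ f ∈ s, Measurable f) (P : Measure Ω) {B : Set Ω}
    (hB : MeasurableSet B) : P.mapAvg s B = (s.card : ℝ≥0∞)⁻¹ * ∑ f ∈ s, P (f ⁻¹' B) := by
  rw [mapAvg, Measure.smul_apply, Measure.finsetSum_apply, smul_eq_mul]
  exact congrArg _ (Finset.sum_congr rfl fun f hf => Measure.map_apply (hs f hf) hB)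

theorem isProbabilityMeasure_mapAvg (hne : s.Nonempty) (hs : ∀ f ∈ s, Measurable f)
    (P : Measure Ω) [IsProbabilityMeasure P] : IsProbabilityMeasure (P.mapAvg s) := by
  constructor
  rw [mapAvg_apply hs P MeasurableSet.univ]
  simp only [preimage_univ, measure_univ, Finset.sum_const, nsmul_eq_mul, mul_one]
  exact ENNReal.inv_mul_cancel (Nat.cast_ne_zero.2 hne.card_ne_zero) (ENNReal.natCast_ne_top _)

theorem lintegral_mapAvg (hs : ∀ f ∈ s, Measurable f) (P : Measure Ω) {h : Ω → ℝ≥0∞}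
    (hh : Measurable h) :
    ∫⁻ ω, h ω ∂P.mapAvg s = (s.card : ℝ≥0∞)⁻¹ * ∑ f ∈ s, ∫⁻ ω, h (f ω) ∂P := by
  rw [mapAvg, lintegral_smul_measure, lintegral_finsetSum_measure, smul_eq_mul]
  exact congrArg _ (Finset.sum_congr rfl fun f hf => lintegral_map hh (hs f hf))

theorem lintegral_mapAvg_of_comp_eq (hne : s.Nonempty) (hs : ∀ f ∈ s, Measurable f)
    (P : Measure Ω) {h : Ω → ℝ≥0∞} (hh : Measurable h) (hinv : ∀ f ∈ s, h ∘ f = h) :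
    ∫⁻ ω, h ω ∂P.mapAvg s = ∫⁻ ω, h ω ∂P := by
  have hterm : ∀ f ∈ s, ∫⁻ ω, h (f ω) ∂P = ∫⁻ ω, h ω ∂P := fun f hf =>
    congrArg (fun g => ∫⁻ ω, g ω ∂P) (hinv f hf)
  rw [lintegral_mapAvg hs P hh, Finset.sum_congr rfl hterm, Finset.sum_const, nsmul_eq_mul,
    ← mul_assoc, ENNReal.inv_mul_cancel (Nat.cast_ne_zero.2 hne.card_ne_zero)
      (ENNReal.natCast_ne_top _), one_mul]

end MeasureTheory.Measure

open Measure in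
theorem measurable_mapAvg_apply {Ω : Type*} {𝓐 : MeasurableSpace Ω} [MeasurableSpace Ω]
    {s : Finset (Ω → Ω)} (hs : ∀ f ∈ s, Measurable f) {μ : Ω → Measure Ω}
    (hμ : ∀ B, MeasurableSet B → Measurable[𝓐] fun ω => μ ω B) {B : Set Ω}
    (hB : MeasurableSet B) : Measurable[𝓐] fun ω => (μ ω).mapAvg s B := by
  simp_rw [mapAvg_apply hs _ hB]
  exact (Finset.measurable_sum s fun f hf => hμ _ (hs f hf hB)).const_mul _

open Measure in
theorem IsRCD.mapAvg {Ω : Type*} [MeasurableSpace Ω] {s : Finset (Ω → Ω)} {F : Set (Ω → Ω)} {P : Measure Ω} {μ : Ω → Measure Ω}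
    (hμ : IsRCD (invariantSigma F) P μ) (hne : s.Nonempty) (hsF : ∀ f ∈ s, f ∈ F)
    (hs : ∀ f ∈ s, Measurable f) :
    IsRCD (invariantSigma F) (P.mapAvg s) fun ω => (μ ω).mapAvg s := by
  obtain ⟨hprob, hmeas, hint⟩ := hμ
  have hle := invariantSigma_le F
  refine ⟨fun ω => isProbabilityMeasure_mapAvg hne hs (μ ω),
    fun B hB => measurable_mapAvg_apply hs hmeas hB, fun B hB A hA => ?_⟩
  have hν := measurable_mapAvg_apply hs hmeas hB
  have hind_inv : ∀ f ∈ s, A.indicator (fun ω => (μ ω).mapAvg s B) ∘ f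
      = A.indicator fun ω => (μ ω).mapAvg s B := fun f hf => by
    funext ω
    rw [Function.comp_apply, ← indicator_comp_right, hA.2 f (hsF f hf),
      comp_eq_of_measurable_invariantSigma hν (hsF f hf)]
  calc ∫⁻ ω in A, (μ ω).mapAvg s B ∂P.mapAvg s
      = ∫⁻ ω in A, (μ ω).mapAvg s B ∂P := by
        rw [← lintegral_indicator hA.1, ← lintegral_indicator hA.1]
        exact lintegral_mapAvg_of_comp_eq hne hs P ((hν.mono hle le_rfl).indicator hA.1)
          hind_inv
    _ = (s.card : ℝ≥0∞)⁻¹ * ∑ f ∈ s, ∫⁻ ω in A, μ ω (f ⁻¹' B) ∂P := by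
        simp_rw [mapAvg_apply hs _ hB]
        rw [lintegral_const_mul' _ _ (ENNReal.inv_ne_top.2 (Nat.cast_ne_zero.2 hne.card_ne_zero)),
          lintegral_finsetSum _ fun f hf => (hmeas _ (hs f hf hB)).mono hle le_rfl]
    _ = (s.card : ℝ≥0∞)⁻¹ * ∑ f ∈ s, P (f ⁻¹' (A ∩ B)) := by
        refine congrArg _ (Finset.sum_congr rfl fun f hf => ?_)
        rw [hint _ (hs f hf hB) A hA, preimage_inter, hA.2 f (hsF f hf)]
    _ = P.mapAvg s (A ∩ B) := (mapAvg_apply hs P (hA.1.inter hB)).symm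

theorem stmt_5_general {Ω : Type*} [m𝓑 : MeasurableSpace Ω]
    (P : @Measure Ω m𝓑)
    (F : Set (Ω → Ω)) (hFfin : F.Finite)
    (hFm : ∀ f ∈ F, Measurable f)
    (hid : id ∈ F)
    (μ : Ω → @Measure Ω m𝓑) (hμ : @IsRCD Ω m𝓑 (invariantSigma F) P μ) :
    @IsRCD Ω m𝓑 (invariantSigma F)
      ((hFfin.toFinset.card : ℝ≥0∞)⁻¹ • ∑ f ∈ hFfin.toFinset, P.map f)
      (fun ω => (hFfin.toFinset.card : ℝ≥0∞)⁻¹ • ∑ f ∈ hFfin.toFinset, (μ ω).map f) :=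
  hμ.mapAvg ⟨id, hFfin.mem_toFinset.2 hid⟩ (fun _ hf => hFfin.mem_toFinset.1 hf)
    fun f hf => hFm f (hFfin.mem_toFinset.1 hf)

/-- For a finite group F of measurable bijections, the averaged kernel ν is
a regular conditional distribution for the averaged measure Q given the invariant σ-field. -/
theorem stmt_5 {Ω : Type*} [m𝓑 : MeasurableSpace Ω]
    (P : @Measure Ω m𝓑) (hP : IsProbabilityMeasure P)
    (F : Set (Ω → Ω)) (hFfin : F.Finite)
    (hFm : ∀ f ∈ F, Measurable f) (hFbij : ∀ f ∈ F, Function.Bijective f)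
    (hid : id ∈ F) (hcomp : ∀ f ∈ F, ∀ g ∈ F, f ∘ g ∈ F)
    (hinv : ∀ f ∈ F, ∃ g ∈ F, f ∘ g = id ∧ g ∘ f = id)
    (μ : Ω → @Measure Ω m𝓑) (hμ : @IsRCD Ω m𝓑 (invariantSigma F) P μ) :
    @IsRCD Ω m𝓑 (invariantSigma F)
      ((hFfin.toFinset.card : ℝ≥0∞)⁻¹ • ∑ f ∈ hFfin.toFinset, P.map f)
      (fun ω => (hFfin.toFinset.card : ℝ≥0∞)⁻¹ • ∑ f ∈ hFfin.toFinset, (μ ω).map f) :=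
  stmt_5_general (m𝓑 := m𝓑) P F hFfin hFm hid μ hμ
end

section
/- Suppose 𝓑 is countably generated, F is a finite group of measurable self-maps of Ω, 𝓐 = 𝓐_F is the F-invariant σ-field, and μ is a regular conditional distribution for P given 𝓐. Then there exists A₀ ∈ 𝓐 with P(A₀) = 1 such that μ(ω)(A) ∈ {0,1} for all A ∈ 𝓐 and all ω ∈ A₀. -/
open MeasureTheory MeasurableSpace Set Filter
open scoped ENNReal

/-!
For a measure `ν` write `ν̄ = ∑_{f ∈ F} f_* ν`; on an `F`-invariant set `A`, `ν̄ A = |F| · ν A`.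
For every `B ∈ 𝓑` the functions `ω ↦ (μ ω)‾ B` and `ω ↦ (δ_ω)‾ B = #{f ∈ F | f ω ∈ B}` are
`𝓐_F`-measurable (the second one because `F` is a group) and have the same integral over every
set of `𝓐_F`, so they agree almost surely. Letting `B` run through a countable algebra
generating `𝓑` gives an invariant full set on which the finite measures `(μ ω)‾` and `(δ_ω)‾`
coincide, hence `μ ω A = δ_ω A ∈ {0, 1}` for every invariant `A`.
-/

theorem Set.Finite.sum_toFinset_comp_right {α M : Type*} [AddCommMonoid M] {F : Set (α → α)}
    (hF : F.Finite) (hcomp : ∀ f ∈ F, ∀ g ∈ F, f ∘ g ∈ F)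
    (hinv : ∀ f ∈ F, ∃ g ∈ F, f ∘ g = id ∧ g ∘ f = id) {g : α → α} (hg : g ∈ F)
    (φ : (α → α) → M) :
    ∑ f ∈ hF.toFinset, φ (f ∘ g) = ∑ f ∈ hF.toFinset, φ f := by
  obtain ⟨g', hg', hgg', hg'g⟩ := hinv g hg
  refine Finset.sum_nbij' (· ∘ g) (· ∘ g') ?_ ?_ ?_ ?_ fun _ _ => rfl
  · intro f hf
    simpa using hcomp f (by simpa using hf) g hg
  · intro f hf
    simpa using hcomp f (by simpa using hf) g' hg'
  · intro f _
    simp [Function.comp_assoc, hgg']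
  · intro f _
    simp [Function.comp_assoc, hg'g]

theorem MeasurableSpace.exists_countable_isSetAlgebra_generateFrom_eq {Ω : Type*}
    [m : MeasurableSpace Ω] [CountablyGenerated Ω] :
    ∃ 𝒜 : Set (Set Ω), 𝒜.Countable ∧ IsSetAlgebra 𝒜 ∧ generateFrom 𝒜 = m :=
  ⟨generateSetAlgebra (countableGeneratingSet Ω),
    countable_generateSetAlgebra countable_countableGeneratingSet, isSetAlgebra_generateSetAlgebra,
    by rw [generateFrom_generateSetAlgebra_eq, generateFrom_countableGeneratingSet]⟩

theorem MeasureTheory.ae_eq_of_forall_setLIntegral_eq_of_le {Ω : Type*}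
    {m m₀ : MeasurableSpace Ω} (hm : m ≤ m₀) {P : Measure[m₀] Ω} [IsFiniteMeasure P]
    {f g : Ω → ℝ≥0∞} (hf : Measurable[m] f) (hg : Measurable[m] g)
    (hfg : ∀ A, MeasurableSet[m] A → ∫⁻ ω in A, f ω ∂P = ∫⁻ ω in A, g ω ∂P) : f =ᵐ[P] g := by
  refine ae_eq_of_ae_eq_trim (hm := hm)
    (ae_eq_of_forall_setLIntegral_eq_of_sigmaFinite hf hg fun A hA _ => ?_)
  rw [setLIntegral_trim hm hf hA, setLIntegral_trim hm hg hA, hfg A hA]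

namespace MeasureTheory.Measure

variable {Ω : Type*} [MeasurableSpace Ω]

noncomputable def symmetrize (s : Finset (Ω → Ω)) (ν : Measure Ω) : Measure Ω :=
  ∑ f ∈ s, ν.map f

instance isFiniteMeasure_symmetrize (s : Finset (Ω → Ω)) (ν : Measure Ω) [IsFiniteMeasure ν] :
    IsFiniteMeasure (symmetrize s ν) := by
  unfold symmetrize
  infer_instance

theorem symmetrize_apply {s : Finset (Ω → Ω)} (hs : ∀ f ∈ s, Measurable f) (ν : Measure Ω)
    {B : Set Ω} (hB : MeasurableSet B) : symmetrize s ν B = ∑ f ∈ s, ν (f ⁻¹' B) := by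
  rw [symmetrize, finsetSum_apply]
  exact Finset.sum_congr rfl fun f hf => map_apply (hs f hf) hB

theorem symmetrize_apply_of_preimage_eq {s : Finset (Ω → Ω)} (hs : ∀ f ∈ s, Measurable f)
    (ν : Measure Ω) {A : Set Ω} (hA : MeasurableSet A) (hAs : ∀ f ∈ s, f ⁻¹' A = A) :
    symmetrize s ν A = s.card * ν A := by
  rw [symmetrize_apply hs ν hA, Finset.sum_congr rfl fun f hf => congrArg ν (hAs f hf)]
  simp

theorem apply_eq_of_symmetrize_eq {s : Finset (Ω → Ω)} (hne : s.Nonempty)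
    (hs : ∀ f ∈ s, Measurable f) {ν ρ : Measure Ω} (h : symmetrize s ν = symmetrize s ρ)
    {A : Set Ω} (hA : MeasurableSet A) (hAs : ∀ f ∈ s, f ⁻¹' A = A) : ν A = ρ A := by
  have hA' := DFunLike.congr_fun h A
  rwa [symmetrize_apply_of_preimage_eq hs ν hA hAs, symmetrize_apply_of_preimage_eq hs ρ hA hAs,
    ENNReal.mul_right_inj (by exact_mod_cast hne.card_pos.ne') (ENNReal.natCast_ne_top _)] at hA'

theorem symmetrize_map {F : Set (Ω → Ω)} (hF : F.Finite) (hFm : ∀ f ∈ F, Measurable f)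
    (hcomp : ∀ f ∈ F, ∀ g ∈ F, f ∘ g ∈ F) (hinv : ∀ f ∈ F, ∃ g ∈ F, f ∘ g = id ∧ g ∘ f = id)
    {g : Ω → Ω} (hg : g ∈ F) (ν : Measure Ω) :
    symmetrize hF.toFinset (ν.map g) = symmetrize hF.toFinset ν :=
  calc ∑ f ∈ hF.toFinset, (ν.map g).map f = ∑ f ∈ hF.toFinset, ν.map (f ∘ g) :=
        Finset.sum_congr rfl fun f hf => map_map (hFm f (hF.mem_toFinset.1 hf)) (hFm g hg)
    _ = ∑ f ∈ hF.toFinset, ν.map f := hF.sum_toFinset_comp_right hcomp hinv hg (ν.map ·)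

end MeasureTheory.Measure

open Measure

namespace IsRCD

variable {Ω : Type*} {𝓐 : MeasurableSpace Ω} [m₀ : MeasurableSpace Ω] {P : Measure Ω}
  {μ : Ω → Measure Ω}

theorem setLIntegral_eq_setLIntegral_dirac (hμ : IsRCD 𝓐 P μ) {B A : Set Ω}
    (hB : MeasurableSet B) (hA : MeasurableSet[𝓐] A) :
    ∫⁻ ω in A, μ ω B ∂P = ∫⁻ ω in A, dirac ω B ∂P := by
  simp_rw [dirac_apply' _ hB]
  rw [hμ.2.2 B hB A hA, lintegral_indicator_one hB, Measure.restrict_apply hB, inter_comm]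

theorem ae_sum_eq_sum_dirac (hμ : IsRCD 𝓐 P μ) (h𝓐 : 𝓐 ≤ m₀) [IsFiniteMeasure P]
    {ι : Type*} (s : Finset ι) {B : ι → Set Ω} (hB : ∀ i ∈ s, MeasurableSet (B i))
    (hdirac : Measurable[𝓐] fun ω => ∑ i ∈ s, dirac ω (B i)) :
    ∀ᵐ ω ∂P, ∑ i ∈ s, μ ω (B i) = ∑ i ∈ s, dirac ω (B i) := by
  have hμB : ∀ i ∈ s, Measurable[𝓐] fun ω => μ ω (B i) := fun i hi => hμ.2.1 _ (hB i hi)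
  refine ae_eq_of_forall_setLIntegral_eq_of_le h𝓐 (Finset.measurable_sum _ hμB) hdirac
    fun A hA => ?_
  rw [lintegral_finsetSum _ fun i hi => (hμB i hi).mono h𝓐 le_rfl,
    lintegral_finsetSum (f := fun i ω => dirac ω (B i)) _ fun i hi =>
      (measurable_coe (hB i hi)).comp measurable_dirac]
  exact Finset.sum_congr rfl fun i hi => hμ.setLIntegral_eq_setLIntegral_dirac (hB i hi) hA

theorem measurable_symmetrize_apply (hμ : IsRCD 𝓐 P μ) {s : Finset (Ω → Ω)}
    (hs : ∀ f ∈ s, Measurable f) {B : Set Ω} (hB : MeasurableSet B) :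
    Measurable[𝓐] fun ω => symmetrize s (μ ω) B := by
  simp_rw [symmetrize_apply hs _ hB]
  exact Finset.measurable_sum _ fun f hf => hμ.2.1 _ (hs f hf hB)

end IsRCD

section invariantSigma

variable {Ω : Type*} [m₀ : MeasurableSpace Ω] {F : Set (Ω → Ω)}

theorem invariantSigma_le_s7 : invariantSigma F ≤ m₀ := fun _ hB => hB.1

theorem measurable_invariantSigma_of_comp_eq {β : Type*} [MeasurableSpace β] {h : Ω → β}
    (hh : Measurable h) (hhF : ∀ f ∈ F, h ∘ f = h) : Measurable[invariantSigma F] h :=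
  fun _ hS => ⟨hh hS, fun f hf => by rw [← preimage_comp, hhF f hf]⟩

theorem measurable_symmetrize_dirac_apply (hF : F.Finite) (hFm : ∀ f ∈ F, Measurable f)
    (hcomp : ∀ f ∈ F, ∀ g ∈ F, f ∘ g ∈ F) (hinv : ∀ f ∈ F, ∃ g ∈ F, f ∘ g = id ∧ g ∘ f = id)
    {B : Set Ω} (hB : MeasurableSet B) :
    Measurable[invariantSigma F] fun ω => symmetrize hF.toFinset (dirac ω) B := by
  have hs : ∀ f ∈ hF.toFinset, Measurable f := fun f hf => hFm f (hF.mem_toFinset.1 hf)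
  refine measurable_invariantSigma_of_comp_eq ?_ fun g hg => funext fun ω => ?_
  · simp_rw [symmetrize_apply hs _ hB]
    exact Finset.measurable_sum _ fun f hf => (measurable_coe (hs f hf hB)).comp measurable_dirac
  · rw [Function.comp_apply, ← map_dirac' (hFm g hg), symmetrize_map hF hFm hcomp hinv hg]

theorem IsRCD.ae_symmetrize_apply_eq_symmetrize_dirac (hF : F.Finite)
    (hFm : ∀ f ∈ F, Measurable f) (hcomp : ∀ f ∈ F, ∀ g ∈ F, f ∘ g ∈ F)
    (hinv : ∀ f ∈ F, ∃ g ∈ F, f ∘ g = id ∧ g ∘ f = id) {P : Measure Ω} [IsFiniteMeasure P]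
    {μ : Ω → Measure Ω} (hμ : IsRCD (invariantSigma F) P μ) {B : Set Ω} (hB : MeasurableSet B) :
    ∀ᵐ ω ∂P, symmetrize hF.toFinset (μ ω) B = symmetrize hF.toFinset (dirac ω) B := by
  have hs : ∀ f ∈ hF.toFinset, Measurable f := fun f hf => hFm f (hF.mem_toFinset.1 hf)
  have hdirac := measurable_symmetrize_dirac_apply hF hFm hcomp hinv hB
  simp_rw [symmetrize_apply hs _ hB] at hdirac ⊢
  exact hμ.ae_sum_eq_sum_dirac invariantSigma_le_s7 _ (fun f hf => hs f hf hB) hdirac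

end invariantSigma

/-- If 𝓑 is countably generated, F is a finite group of measurable
self-maps, and μ is an r.c.d. for P given 𝓐_F, then μ(ω) is 0-1 on 𝓐_F for ω in a
P-full set A₀ ∈ 𝓐_F. -/
theorem stmt_7 {Ω : Type*} [m𝓑 : MeasurableSpace Ω] [CountablyGenerated Ω]
    (P : @Measure Ω m𝓑) (hP : IsProbabilityMeasure P)
    (F : Set (Ω → Ω)) (hFfin : F.Finite) (hFm : ∀ f ∈ F, Measurable f)
    (hid : id ∈ F) (hcomp : ∀ f ∈ F, ∀ g ∈ F, f ∘ g ∈ F)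
    (hinv : ∀ f ∈ F, ∃ g ∈ F, f ∘ g = id ∧ g ∘ f = id)
    (μ : Ω → @Measure Ω m𝓑) (hμ : @IsRCD Ω m𝓑 (invariantSigma F) P μ) :
    ∃ A₀ : Set Ω, MeasurableSet[invariantSigma F] A₀ ∧ P A₀ = 1 ∧
      ∀ ω ∈ A₀, ∀ A : Set Ω, MeasurableSet[invariantSigma F] A →
        μ ω A = 0 ∨ μ ω A = 1 := by
  set s := hFfin.toFinset
  have hs : ∀ f ∈ s, Measurable f := fun f hf => hFm f (hFfin.mem_toFinset.1 hf)
  obtain ⟨𝒜, h𝒜count, h𝒜, h𝒜gen⟩ := exists_countable_isSetAlgebra_generateFrom_eq (Ω := Ω)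
  have h𝒜meas : ∀ D ∈ 𝒜, MeasurableSet D := fun D hD => h𝒜gen ▸ measurableSet_generateFrom hD
  set A₀ := {ω | ∀ D ∈ 𝒜, symmetrize s (μ ω) D = symmetrize s (dirac ω) D}
  have hA₀ : MeasurableSet[invariantSigma F] A₀ := by
    simp only [A₀, ofPred_forall]
    exact .biInter h𝒜count fun D hD => measurableSet_eq_fun
      (hμ.measurable_symmetrize_apply hs (h𝒜meas D hD))
      (measurable_symmetrize_dirac_apply hFfin hFm hcomp hinv (h𝒜meas D hD))
  refine ⟨A₀, hA₀, ?_, fun ω hω A hA => ?_⟩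
  · rw [← measure_univ (μ := P), ← ae_iff_measure_eq (invariantSigma_le_s7 A₀ hA₀).nullMeasurableSet]
    exact (ae_ball_iff h𝒜count).2 fun D hD =>
      hμ.ae_symmetrize_apply_eq_symmetrize_dirac hFfin hFm hcomp hinv (h𝒜meas D hD)
  · have : IsProbabilityMeasure (μ ω) := hμ.1 ω
    have hsym : symmetrize s (μ ω) = symmetrize s (dirac ω) :=
      ext_of_generate_finite 𝒜 h𝒜gen.symm (fun _ hD _ hE _ => h𝒜.inter_mem hD hE) hω
        (hω univ h𝒜.univ_mem)
    rw [apply_eq_of_symmetrize_eq ⟨id, hFfin.mem_toFinset.2 hid⟩ hs hsym hA.1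
      fun f hf => hA.2 f (hFfin.mem_toFinset.1 hf)]
    exact dirac_apply_eq_zero_or_one
end

section
/- Let Q ≪ P with density f, 𝓐 ⊂ 𝓑 a sub-σ-field, μ a regular conditional distribution for P given 𝓐, and A₁ = {ω : 0 < ∫ f dμ(ω) < ∞}. Then A₁ ∈ 𝓐, Q(A₁) = 1, and the map ν defined on A₁ by ν(ω)(B) = (∫_B f dμ(ω)) / (∫ f dμ(ω)) (arbitrarily extended off A₁) is a regular conditional distribution for Q given 𝓐. -/
open MeasureTheory MeasurableSpace Set Filter
open scoped ENNReal

/-!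
Write `g ω = ∫⁻ f ∂μ ω`. The defining identity of `μ` says that `(P|_A).bind μ = P|_A` for
`A ∈ 𝓐`, so `∫_A (∫ φ dμ) dP = ∫_A φ dP`; since an `𝓐`-measurable weight only sees the
restrictions of measures to `𝓐`, the same holds after multiplying by such a weight. With `φ = f`
this gives `Q {g = 0} = ∫_{g = 0} g dP = 0` and `∫ g dP = Q Ω < ∞`, so `g ∈ (0, ∞)` `Q`-a.s.
Integrating the `𝓐`-measurable weight `g⁻¹ ∫_B f dμ` over `A` against `Q = f • P` and pulling it
out replaces `f` by `g`, which cancels the normalisation and leaves `∫_A 1_B f dP = Q (A ∩ B)`.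
-/

theorem isProbabilityMeasure_inv_lintegral_smul_withDensity {Ω : Type*} [MeasurableSpace Ω]
    {m : Measure Ω} {f : Ω → ℝ≥0∞} (h0 : ∫⁻ x, f x ∂m ≠ 0) (htop : ∫⁻ x, f x ∂m ≠ ∞) :
    IsProbabilityMeasure ((∫⁻ x, f x ∂m)⁻¹ • m.withDensity f) := by
  constructor
  rw [Measure.smul_apply, withDensity_apply _ MeasurableSet.univ, setLIntegral_univ,
    smul_eq_mul, ENNReal.inv_mul_cancel h0 htop]

namespace IsRCD

variable {Ω : Type*} {𝓐 : MeasurableSpace Ω} [m𝓑 : MeasurableSpace Ω] {P : Measure Ω}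
  {μ : Ω → Measure Ω} {f φ ψ : Ω → ℝ≥0∞} {A B : Set Ω}

theorem measurable (hμ : IsRCD 𝓐 P μ) : Measurable[𝓐] μ :=
  Measure.measurable_of_measurable_coe (mβ := 𝓐) μ hμ.2.1

theorem measurable_lintegral (hμ : IsRCD 𝓐 P μ) (hφ : Measurable φ) :
    Measurable[𝓐] fun ω => ∫⁻ x, φ x ∂μ ω :=
  (Measure.measurable_lintegral hφ).comp hμ.measurable

theorem measurable_withDensity_apply (hμ : IsRCD 𝓐 P μ) (hf : Measurable f)
    (hB : MeasurableSet B) : Measurable[𝓐] fun ω => (μ ω).withDensity f B := by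
  simp_rw [withDensity_apply _ hB, ← lintegral_indicator hB]
  exact hμ.measurable_lintegral (hf.indicator hB)

theorem bind_restrict (hμ : IsRCD 𝓐 P μ) (h𝓐 : 𝓐 ≤ m𝓑) (hA : MeasurableSet[𝓐] A) :
    (P.restrict A).bind μ = P.restrict A := by
  ext B hB
  rw [Measure.bind_apply hB (hμ.measurable.mono h𝓐 le_rfl).aemeasurable, hμ.2.2 B hB A hA,
    Measure.restrict_apply hB, inter_comm]

theorem setLIntegral_lintegral (hμ : IsRCD 𝓐 P μ) (h𝓐 : 𝓐 ≤ m𝓑) (hφ : Measurable φ)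
    (hA : MeasurableSet[𝓐] A) :
    ∫⁻ ω in A, ∫⁻ x, φ x ∂μ ω ∂P = ∫⁻ ω in A, φ ω ∂P := by
  conv_rhs => rw [← hμ.bind_restrict h𝓐 hA]
  exact (Measure.lintegral_bind (hμ.measurable.mono h𝓐 le_rfl).aemeasurable
    hφ.aemeasurable).symm

theorem setLIntegral_lintegral_mul (hμ : IsRCD 𝓐 P μ) (h𝓐 : 𝓐 ≤ m𝓑) (hφ : Measurable φ)
    (hψ : Measurable[𝓐] ψ) (hA : MeasurableSet[𝓐] A) :
    ∫⁻ ω in A, (∫⁻ x, φ x ∂μ ω) * ψ ω ∂P = ∫⁻ ω in A, φ ω * ψ ω ∂P := by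
  have hG := hμ.measurable_lintegral hφ
  have htrim : ((P.restrict A).withDensity fun ω => ∫⁻ x, φ x ∂μ ω).trim h𝓐 =
      ((P.restrict A).withDensity φ).trim h𝓐 := by
    refine @Measure.ext _ 𝓐 _ _ fun A' hA' => ?_
    rw [trim_measurableSet_eq h𝓐 hA', trim_measurableSet_eq h𝓐 hA',
      withDensity_apply _ (h𝓐 _ hA'), withDensity_apply _ (h𝓐 _ hA'),
      Measure.restrict_restrict (h𝓐 _ hA'), hμ.setLIntegral_lintegral h𝓐 hφ (hA'.inter hA)]
  calc ∫⁻ ω in A, (∫⁻ x, φ x ∂μ ω) * ψ ω ∂P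
      = ∫⁻ ω, ψ ω ∂(P.restrict A).withDensity fun ω => ∫⁻ x, φ x ∂μ ω :=
        (lintegral_withDensity_eq_lintegral_mul _ (hG.mono h𝓐 le_rfl) (hψ.mono h𝓐 le_rfl)).symm
    _ = ∫⁻ ω, ψ ω ∂(P.restrict A).withDensity φ := by
        rw [← lintegral_trim h𝓐 hψ, htrim, lintegral_trim h𝓐 hψ]
    _ = ∫⁻ ω in A, φ ω * ψ ω ∂P :=
        lintegral_withDensity_eq_lintegral_mul _ hφ (hψ.mono h𝓐 le_rfl)

theorem ae_withDensity_lintegral_mem_Ioo (hμ : IsRCD 𝓐 P μ) (h𝓐 : 𝓐 ≤ m𝓑) (hf : Measurable f)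
    [IsFiniteMeasure (P.withDensity f)] :
    ∀ᵐ ω ∂P.withDensity f, ∫⁻ x, f x ∂μ ω ∈ Ioo 0 ∞ := by
  set g := fun ω => ∫⁻ x, f x ∂μ ω
  have hg : Measurable[𝓐] g := hμ.measurable_lintegral hf
  have hS : MeasurableSet[𝓐] {ω | g ω = 0} := hg (measurableSet_singleton 0)
  have hpos : P.withDensity f {ω | g ω = 0} = 0 := by
    rw [withDensity_apply _ (h𝓐 _ hS), ← hμ.setLIntegral_lintegral h𝓐 hf hS,
      setLIntegral_congr_fun (h𝓐 _ hS) fun ω (hω : g ω = 0) => hω, lintegral_zero]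
  have hfin : ∀ᵐ ω ∂P, g ω < ∞ := by
    refine ae_lt_top (hg.mono h𝓐 le_rfl) ?_
    rw [← setLIntegral_univ, hμ.setLIntegral_lintegral h𝓐 hf MeasurableSet.univ,
      ← withDensity_apply _ MeasurableSet.univ]
    exact measure_ne_top _ _
  filter_upwards [measure_eq_zero_iff_ae_notMem.1 hpos,
    (withDensity_absolutelyContinuous P f).ae_le hfin] with ω h0 htop
  exact ⟨pos_iff_ne_zero.2 h0, htop⟩

theorem setLIntegral_withDensity_inv_mul (hμ : IsRCD 𝓐 P μ) (h𝓐 : 𝓐 ≤ m𝓑) (hf : Measurable f)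
    [IsFiniteMeasure (P.withDensity f)] (hA : MeasurableSet[𝓐] A) (hB : MeasurableSet B) :
    ∫⁻ ω in A, (∫⁻ x, f x ∂μ ω)⁻¹ * (μ ω).withDensity f B ∂P.withDensity f =
      P.withDensity f (A ∩ B) := by
  set g := fun ω => ∫⁻ x, f x ∂μ ω
  set H := fun ω => (μ ω).withDensity f B
  have hg : Measurable[𝓐] g := hμ.measurable_lintegral hf
  have hH : Measurable[𝓐] H := hμ.measurable_withDensity_apply hf hB
  set A₁ := g ⁻¹' Ioo 0 ∞
  have hA₁ : P.withDensity f A₁ᶜ = 0 := ae_iff.1 (hμ.ae_withDensity_lintegral_mem_Ioo h𝓐 hf)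
  have hAA₁ : MeasurableSet[𝓐] (A ∩ A₁) := hA.inter (hg measurableSet_Ioo)
  calc ∫⁻ ω in A, (g ω)⁻¹ * H ω ∂P.withDensity f
      = ∫⁻ ω in A ∩ A₁, (g ω)⁻¹ * H ω ∂P.withDensity f := by
        rw [Measure.restrict_congr_set (inter_ae_eq_left_of_ae_eq_univ (ae_eq_univ.2 hA₁))]
    _ = ∫⁻ ω in A ∩ A₁, f ω * ((g ω)⁻¹ * H ω) ∂P := by
        rw [restrict_withDensity (h𝓐 _ hAA₁)]
        exact lintegral_withDensity_eq_lintegral_mul _ hf ((hg.inv.mul hH).mono h𝓐 le_rfl)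
    _ = ∫⁻ ω in A ∩ A₁, g ω * ((g ω)⁻¹ * H ω) ∂P :=
        (hμ.setLIntegral_lintegral_mul h𝓐 hf (hg.inv.mul hH) hAA₁).symm
    _ = ∫⁻ ω in A ∩ A₁, H ω ∂P :=
        setLIntegral_congr_fun (h𝓐 _ hAA₁) fun ω hω =>
          ENNReal.mul_inv_cancel_left hω.2.1.ne' hω.2.2.ne
    _ = ∫⁻ ω in A ∩ A₁, B.indicator f ω ∂P := by
        simp_rw [H, withDensity_apply _ hB, ← lintegral_indicator hB]
        exact hμ.setLIntegral_lintegral h𝓐 (hf.indicator hB) hAA₁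
    _ = P.withDensity f (A ∩ B) := by
        rw [lintegral_indicator hB, Measure.restrict_restrict hB,
          ← withDensity_apply _ (hB.inter (h𝓐 _ hAA₁)), inter_comm, inter_right_comm]
        exact measure_inter_conull hA₁

end IsRCD

/-- If Q ≪ P with density f, then A₁ = {ω : 0 < ∫ f dμ(ω) < ∞} is an
𝓐-measurable Q-full set, and the normalized density kernel ν is an r.c.d. for Q
given 𝓐. -/
theorem stmt_9 {Ω : Type*} [m𝓑 : MeasurableSpace Ω]
    (P Q : @Measure Ω m𝓑) (hP : IsProbabilityMeasure P) (hQprob : IsProbabilityMeasure Q)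
    (𝓐 : MeasurableSpace Ω) (h𝓐 : 𝓐 ≤ m𝓑)
    (f : Ω → ℝ≥0∞) (hf : Measurable[m𝓑] f) (hQ : Q = P.withDensity f)
    (μ : Ω → @Measure Ω m𝓑) (hμ : @IsRCD Ω m𝓑 𝓐 P μ)
    (A₁ : Set Ω) (hA₁ : A₁ = {ω | 0 < ∫⁻ x, f x ∂(μ ω) ∧ ∫⁻ x, f x ∂(μ ω) < ∞})
    (ν : Ω → @Measure Ω m𝓑)
    (hν : ∀ ω ∈ A₁, ν ω = (∫⁻ x, f x ∂(μ ω))⁻¹ • (μ ω).withDensity f)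
    (hνout : ∀ ω ∉ A₁, ν ω = P) :
    MeasurableSet[𝓐] A₁ ∧ Q A₁ = 1 ∧ @IsRCD Ω m𝓑 𝓐 Q ν := by
  classical
  -- otherwise the later binder `𝓐` would be the default `MeasurableSpace Ω` instance
  let _ := m𝓑
  subst hQ
  have hg : Measurable[𝓐] fun ω => ∫⁻ x, f x ∂μ ω := hμ.measurable_lintegral hf
  have hA₁𝓐 : MeasurableSet[𝓐] A₁ := hA₁ ▸ hg measurableSet_Ioo
  have hae : ∀ᵐ ω ∂P.withDensity f, ω ∈ A₁ := hA₁ ▸ hμ.ae_withDensity_lintegral_mem_Ioo h𝓐 hf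
  refine ⟨hA₁𝓐, (prob_compl_eq_zero_iff (h𝓐 _ hA₁𝓐)).1 (ae_iff.1 hae), fun ω => ?_,
    fun B hB => ?_, fun B hB A hA => ?_⟩
  · by_cases h : ω ∈ A₁
    · obtain ⟨h0, htop⟩ : ω ∈ {ω | 0 < ∫⁻ x, f x ∂(μ ω) ∧ ∫⁻ x, f x ∂(μ ω) < ∞} := hA₁ ▸ h
      rw [hν ω h]
      exact isProbabilityMeasure_inv_lintegral_smul_withDensity h0.ne' htop.ne
    · rw [hνout ω h]
      exact hP
  · have hνB : (fun ω => ν ω B) =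
        A₁.piecewise (fun ω => (∫⁻ x, f x ∂μ ω)⁻¹ * (μ ω).withDensity f B) fun _ => P B := by
      funext ω
      by_cases h : ω ∈ A₁ <;> simp [h, hν, hνout]
    rw [hνB]
    exact Measurable.piecewise hA₁𝓐 (hg.inv.mul (hμ.measurable_withDensity_apply hf hB))
      measurable_const
  · rw [← hμ.setLIntegral_withDensity_inv_mul h𝓐 hf hA hB]
    refine setLIntegral_congr_fun_ae (h𝓐 _ hA) ?_
    filter_upwards [hae] with ω hω _
    rw [hν ω hω, Measure.smul_apply, smul_eq_mul]
end

section
/- Let Q be a probability measure on (Ω, 𝓑), where 𝓑 = σ(X_n : n ≥ 1) for real random variables X_n, and let 𝓐 = ⋂_n σ(X_n, X_{n+1}, …) be the tail σ-field. If Q(A) ∈ {0,1} for every A ∈ 𝓐, then for every B ∈ 𝓑, sup_{H ∈ σ(X_n, X_{n+1},…)} |Q(B ∩ H) − Q(B)Q(H)| → 0 as n → ∞. -/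
open MeasureTheory MeasurableSpace Set Filter
open scoped ENNReal Topology

/-! Let `P n` be the orthogonal projection of `L²(μ)` onto the `𝓣 n`-measurable functions. For
`H ∈ 𝓣 n` we have `μ(B ∩ H) - μ(B) μ(H) = ⟪1_H, P n 1_B - μ(B)⟫`, so the supremum is at most
`‖P n 1_B - μ(B)‖₂`. The ranges of `P n` decrease, so `P n 1_B` converges in `L²` to some `y`
which is, up to a null set, measurable for each `𝓣 n`, hence (via a `limsup` of representatives)
for the tail σ-algebra. Being 0-1 on the tail, `μ` makes `y` a.e. constant, and pairing with `1`
identifies the constant as `μ(B)`. -/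

theorem Submodule.exists_tendsto_starProjection_of_antitone {𝕜 E : Type*} [RCLike 𝕜]
    [NormedAddCommGroup E] [InnerProductSpace 𝕜 E] [CompleteSpace E]
    {K : ℕ → Submodule 𝕜 E} [∀ n, (K n).HasOrthogonalProjection] (hK : Antitone K) (x : E) :
    ∃ y ∈ ⨅ n, K n, Tendsto (fun n => (K n).starProjection x) atTop (𝓝 y) := by
  have hKperp : Monotone fun n => (K n)ᗮ := fun m n hmn => Submodule.orthogonal_le (hK hmn)
  set z := (⨆ n, (K n)ᗮ).topologicalClosure.starProjection x
  have hlim : Tendsto (fun n => (K n).starProjection x) atTop (𝓝 (x - z)) := by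
    have := (Submodule.starProjection_tendsto_closure_iSup _ hKperp x).const_sub x
    simpa only [Submodule.starProjection_orthogonal_val, sub_sub_cancel] using this
  refine ⟨x - z, Submodule.mem_iInf _ |>.mpr fun m => ?_, hlim⟩
  have hclosed : IsClosed (K m : Set E) := by
    rw [← Submodule.orthogonal_orthogonal (K m)]
    exact Submodule.isClosed_orthogonal _
  exact hclosed.mem_of_tendsto hlim <| eventually_atTop.mpr
    ⟨m, fun n hn => hK hn ((K n).starProjection_apply_mem x)⟩

theorem aestronglyMeasurable_iInf_of_antitone {Ω : Type*} {m0 : MeasurableSpace Ω}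
    {μ : Measure Ω} {m : ℕ → MeasurableSpace Ω} (hm : Antitone m) {f : Ω → ℝ}
    (hf : ∀ n, AEStronglyMeasurable[m n] f μ) : AEStronglyMeasurable[⨅ n, m n] f μ := by
  choose g hg hfg using hf
  refine ⟨fun ω => limsup (fun n => g n ω) atTop, ?_, ?_⟩
  · refine Measurable.stronglyMeasurable fun s hs => MeasurableSpace.measurableSet_iInf.mpr
      fun k => ?_
    have hshift : (fun ω => limsup (fun n => g n ω) atTop)
        = fun ω => limsup (fun n => g (n + k) ω) atTop :=
      funext fun ω => (limsup_nat_add (fun n => g n ω) k).symm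
    rw [hshift]
    exact Measurable.limsup (fun n => ((hg (n + k)).mono (hm (Nat.le_add_left k n))).measurable) hs
  · filter_upwards [ae_all_iff.mpr hfg] with ω hω
    simp only [← hω, limsup_const]

theorem exists_ae_eq_const_of_measure_eq_zero_or_one {Ω β : Type*} {m m0 : MeasurableSpace Ω}
    {μ : Measure Ω} [IsProbabilityMeasure μ] (hm : m ≤ m0)
    (h01 : ∀ s, MeasurableSet[m] s → μ s = 0 ∨ μ s = 1) [Nonempty β] [MeasurableSpace β]
    [MeasurableSpace.CountablySeparated β] {g : Ω → β} (hg : Measurable[m] g) :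
    ∃ c, g =ᵐ[μ] Function.const Ω c := by
  refine exists_eventuallyEq_const_of_forall_separating MeasurableSet fun U hU => ?_
  rcases h01 _ (hg hU) with h0 | h1
  · exact Or.inr (measure_eq_zero_iff_ae_notMem.mp h0)
  · exact Or.inl (ae_iff.mpr ((prob_compl_eq_zero_iff (hm _ (hg hU))).mpr h1))

theorem abs_measureReal_inter_sub_mul_le_norm_starProjection_sub {Ω : Type*}
    {m0 : MeasurableSpace Ω} {μ : Measure Ω} [IsProbabilityMeasure μ]
    (K : Submodule ℝ (Lp ℝ 2 μ)) [K.HasOrthogonalProjection] {B H : Set Ω}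
    (hB : MeasurableSet B) (hH : MeasurableSet H)
    (hHK : indicatorConstLp 2 hH (measure_ne_top μ H) (1 : ℝ) ∈ K) (c : ℝ) :
    |μ.real (B ∩ H) - c * μ.real H| ≤
      ‖K.starProjection (indicatorConstLp 2 hB (measure_ne_top μ B) (1 : ℝ)) -
        indicatorConstLp 2 MeasurableSet.univ (measure_ne_top μ _) c‖ := by
  set indH := indicatorConstLp 2 hH (measure_ne_top μ H) (1 : ℝ)
  have hinner : μ.real (B ∩ H) - c * μ.real H =
      inner ℝ indH (K.starProjection (indicatorConstLp 2 hB (measure_ne_top μ B) (1 : ℝ)) -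
        indicatorConstLp 2 MeasurableSet.univ (measure_ne_top μ _) c) := by
    rw [inner_sub_right, ← Submodule.inner_starProjection_left_eq_right,
      (K.starProjection_eq_self_iff).mpr hHK, L2.inner_indicatorConstLp_indicatorConstLp,
      L2.inner_indicatorConstLp_indicatorConstLp]
    simp [inter_comm, mul_comm]
  have hnorm : ‖indH‖ ≤ 1 := by
    refine norm_indicatorConstLp_le.trans ?_
    rw [norm_one, one_mul]
    exact Real.rpow_le_one measureReal_nonneg measureReal_le_one (by positivity)
  rw [hinner]
  exact (abs_real_inner_le_norm _ _).trans (mul_le_of_le_one_left (norm_nonneg _) hnorm)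

theorem tendsto_iSup_abs_measureReal_inter_sub_mul_of_antitone {Ω : Type*}
    {m0 : MeasurableSpace Ω} {μ : Measure Ω} [IsProbabilityMeasure μ]
    {𝓣 : ℕ → MeasurableSpace Ω} (hle : ∀ n, 𝓣 n ≤ m0) (hanti : Antitone 𝓣)
    (h01 : ∀ A, MeasurableSet[⨅ n, 𝓣 n] A → μ A = 0 ∨ μ A = 1)
    {B : Set Ω} (hB : MeasurableSet B) :
    Tendsto (fun n => ⨆ H : {H : Set Ω // MeasurableSet[𝓣 n] H},
      |μ.real (B ∩ H.1) - μ.real B * μ.real H.1|) atTop (𝓝 0) := by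
  have : ∀ n, Fact (𝓣 n ≤ m0) := fun n => ⟨hle n⟩
  set K : ℕ → Submodule ℝ (Lp ℝ 2 μ) := fun n => lpMeas ℝ ℝ (𝓣 n) 2 μ
  have hK : Antitone K := fun m n hmn f hf => mem_lpMeas_iff_aestronglyMeasurable.mpr
    ((mem_lpMeas_iff_aestronglyMeasurable.mp hf).mono (hanti hmn))
  set F := indicatorConstLp 2 hB (measure_ne_top μ B) (1 : ℝ)
  obtain ⟨y, hyK, hy⟩ := Submodule.exists_tendsto_starProjection_of_antitone hK F
  obtain ⟨g, hg, hyg⟩ := aestronglyMeasurable_iInf_of_antitone hanti fun n =>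
    mem_lpMeas_iff_aestronglyMeasurable.mp ((Submodule.mem_iInf _).mp hyK n)
  obtain ⟨c, hgc⟩ := exists_ae_eq_const_of_measure_eq_zero_or_one
    (iInf_le_of_le 0 (hle 0)) h01 hg.measurable
  have hy_const : y = indicatorConstLp 2 MeasurableSet.univ (measure_ne_top μ _) c := by
    refine Lp.ext (hyg.trans (hgc.trans (indicatorConstLp_coeFn.trans ?_).symm))
    rw [indicator_univ]
    rfl
  have hbound : ∀ n H, MeasurableSet[𝓣 n] H →
      |μ.real (B ∩ H) - c * μ.real H| ≤ ‖(K n).starProjection F - y‖ := fun n H hH =>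
    hy_const ▸ abs_measureReal_inter_sub_mul_le_norm_starProjection_sub (K n) hB (hle n H hH)
      (mem_lpMeas_indicatorConstLp (hle n) hH (measure_ne_top μ H)) c
  have hdist : Tendsto (fun n => ‖(K n).starProjection F - y‖) atTop (𝓝 0) :=
    tendsto_iff_norm_sub_tendsto_zero.mp hy
  obtain rfl : c = μ.real B := by
    have := ge_of_tendsto' hdist fun n => hbound n univ MeasurableSet.univ
    simp only [inter_univ, probReal_univ, mul_one] at this
    linarith [abs_nonpos_iff.mp this]
  refine squeeze_zero (fun n => Real.iSup_nonneg fun _ => abs_nonneg _)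
    (fun n => Real.iSup_le (fun H => hbound n H.1 H.2) (norm_nonneg _)) hdist

/-- If Q is 0-1 on the tail σ-field of (X_n), then 𝓑 is asymptotically
independent of (X_n, X_{n+1}, …) under Q. -/
theorem stmt_11 {Ω : Type*} [m𝓑 : MeasurableSpace Ω] (X : ℕ → Ω → ℝ)
    (hgen : m𝓑 = ⨆ n, MeasurableSpace.comap (X n) inferInstance)
    (𝓣 : ℕ → MeasurableSpace Ω)
    (h𝓣 : ∀ n, 𝓣 n = ⨆ k, ⨆ _ : n ≤ k, MeasurableSpace.comap (X k) inferInstance)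
    (𝓐 : MeasurableSpace Ω) (h𝓐 : 𝓐 = ⨅ n, 𝓣 n)
    (Q : @Measure Ω m𝓑) (hQprob : IsProbabilityMeasure Q)
    (h01 : ∀ A : Set Ω, MeasurableSet[𝓐] A → Q A = 0 ∨ Q A = 1) :
    ∀ B : Set Ω, MeasurableSet[m𝓑] B →
      Tendsto (fun n => ⨆ H : {H : Set Ω // MeasurableSet[𝓣 n] H},
          |(Q (B ∩ H.1)).toReal - (Q B).toReal * (Q H.1).toReal|)
        atTop (nhds 0) := by
  intro B hB
  have hle : ∀ n, 𝓣 n ≤ m𝓑 := fun n => by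
    rw [h𝓣 n, hgen]
    exact iSup₂_le fun k _ => le_iSup (fun k => MeasurableSpace.comap (X k) inferInstance) k
  have hanti : Antitone 𝓣 := fun m n hmn => by
    rw [h𝓣 m, h𝓣 n]
    exact iSup₂_le fun k hk =>
      le_iSup₂_of_le (f := fun k (_ : m ≤ k) => MeasurableSpace.comap (X k) inferInstance) k
        (hmn.trans hk) le_rfl
  subst h𝓐
  exact tendsto_iSup_abs_measureReal_inter_sub_mul_of_antitone hle hanti h01 hB
end

section
/- Let μ be a probability measure on (Ω, 𝓑) and (𝓐_n) a sequence of sub-σ-fields such that sup_{H ∈ 𝓐_n} |μ(A ∩ H) − μ(A)μ(H)| → 0 along a subsequence for every A ∈ 𝓑 (in particular for A in every 𝓐_k eventually). Then μ(A) ∈ {0,1} for every A ∈ σ(⋃_{n≥1} ⋂_{j≥n} 𝓐_j). -/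
open MeasureTheory MeasurableSpace Set Filter ProbabilityTheory
open scoped ENNReal

/-- If V_{n_j}^B → 0 for every B ∈ 𝓑 along a subsequence, then μ is 0-1
on σ(⋃_n ⋂_{j≥n} 𝓐_j). -/
theorem stmt_15 {Ω : Type*} [m𝓑 : MeasurableSpace Ω]
    (μ : @Measure Ω m𝓑) (hμprob : IsProbabilityMeasure μ)
    (𝓐n : ℕ → MeasurableSpace Ω) (h𝓐n : ∀ n, 𝓐n n ≤ m𝓑)
    (nj : ℕ → ℕ) (hnj : StrictMono nj)
    (V : ℕ → Set Ω → ℝ)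
    (hV : ∀ n, ∀ B : Set Ω, V n B = ⨆ H : {H : Set Ω // MeasurableSet[𝓐n n] H},
      |(μ (B ∩ H.1)).toReal - (μ B).toReal * (μ H.1).toReal|)
    (hconv : ∀ B : Set Ω, MeasurableSet[m𝓑] B →
      Tendsto (fun j => V (nj j) B) atTop (nhds 0)) :
    ∀ A : Set Ω, MeasurableSet[⨆ n, ⨅ j, ⨅ _ : n ≤ j, 𝓐n j] A →
      μ A = 0 ∨ μ A = 1 := by
  haveI := hμprob
  set 𝓛 : ℕ → MeasurableSpace Ω := fun n => ⨅ j, ⨅ _ : n ≤ j, 𝓐n j with h𝓛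
  -- 𝓛 n ≤ 𝓐n j for j ≥ n
  have h𝓛le : ∀ n j, n ≤ j → 𝓛 n ≤ 𝓐n j := fun n j hnjle => iInf₂_le j hnjle
  have h𝓛mono : Monotone 𝓛 := by
    intro n m hnm
    exact le_iInf₂ fun j hmj => iInf₂_le j (hnm.trans hmj)
  have h𝓛m𝓑 : ∀ n, 𝓛 n ≤ m𝓑 := fun n => (h𝓛le n n le_rfl).trans (h𝓐n n)
  -- core independence fact
  have core : ∀ B : Set Ω, MeasurableSet[m𝓑] B → ∀ n (A : Set Ω),
      MeasurableSet[𝓛 n] A → μ (A ∩ B) = μ A * μ B := by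
    intro B hB n A hA
    have key : ∀ j, n ≤ j →
        |(μ (B ∩ A)).toReal - (μ B).toReal * (μ A).toReal| ≤ V (nj j) B := by
      intro j hj
      have hA' : MeasurableSet[𝓐n (nj j)] A := h𝓛le n (nj j) (hj.trans hnj.le_apply) A hA
      rw [hV]
      have hbdd : BddAbove (Set.range fun H : {H : Set Ω // MeasurableSet[𝓐n (nj j)] H} =>
          |(μ (B ∩ H.1)).toReal - (μ B).toReal * (μ H.1).toReal|) := by
        refine ⟨2, ?_⟩
        rintro x ⟨H, rfl⟩
        have h1 : ∀ s : Set Ω, (μ s).toReal ≤ 1 := fun s => by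
          have := prob_le_one (μ := μ) (s := s)
          simpa using ENNReal.toReal_mono ENNReal.one_ne_top this
        have h0 : ∀ s : Set Ω, 0 ≤ (μ s).toReal := fun s => ENNReal.toReal_nonneg
        have := abs_sub_abs_le_abs_sub ((μ (B ∩ H.1)).toReal) ((μ B).toReal * (μ H.1).toReal)
        calc |(μ (B ∩ H.1)).toReal - (μ B).toReal * (μ H.1).toReal|
            ≤ |(μ (B ∩ H.1)).toReal| + |(μ B).toReal * (μ H.1).toReal| := abs_sub _ _
          _ ≤ 1 + 1 := by
              gcongr
              · rw [abs_of_nonneg (h0 _)]; exact h1 _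
              · rw [abs_of_nonneg (mul_nonneg (h0 _) (h0 _))]
                exact mul_le_one₀ (h1 _) (h0 _) (h1 _)
          _ = 2 := by norm_num
      exact le_ciSup hbdd ⟨A, hA'⟩
    have hle : |(μ (B ∩ A)).toReal - (μ B).toReal * (μ A).toReal| ≤ 0 :=
      ge_of_tendsto (hconv B hB) (eventually_atTop.2 ⟨n, key⟩)
    have heq : (μ (B ∩ A)).toReal = (μ B).toReal * (μ A).toReal := by
      have := abs_eq_zero.mp (le_antisymm hle (abs_nonneg _))
      linarith
    have hAm : MeasurableSet[m𝓑] A := h𝓛m𝓑 n A hA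
    have : μ (B ∩ A) = μ B * μ A := by
      rw [← ENNReal.toReal_eq_toReal_iff' (measure_ne_top μ _)
        (ENNReal.mul_ne_top (measure_ne_top μ _) (measure_ne_top μ _)), ENNReal.toReal_mul]
      exact heq
    rw [Set.inter_comm, this, mul_comm]
  -- independence of σ-algebras
  set p1 : Set (Set Ω) := ⋃ n, {s | MeasurableSet[𝓛 n] s} with hp1def
  have hp1 : IsPiSystem p1 := by
    refine isPiSystem_iUnion_of_monotone _ (fun n => ?_) (fun n m hnm s hs => h𝓛mono hnm s hs)
    exact fun s hs t ht _ => @MeasurableSet.inter Ω (𝓛 n) _ _ hs ht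
  have hp2 : IsPiSystem {s : Set Ω | MeasurableSet[m𝓑] s} := isPiSystem_measurableSet
  have hgen1 : (⨆ n, 𝓛 n) = generateFrom p1 :=
    (generateFrom_iUnion_measurableSet 𝓛).symm
  have hgen2 : m𝓑 = generateFrom {s : Set Ω | MeasurableSet[m𝓑] s} :=
    (generateFrom_measurableSet).symm
  have hindepSets : IndepSets p1 {s : Set Ω | MeasurableSet[m𝓑] s} μ := by
    rw [IndepSets_iff]
    intro t1 t2 ht1 ht2
    obtain ⟨_, ⟨n, rfl⟩, ht1'⟩ := ht1
    exact core t2 ht2 n t1 ht1'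
  have hindep : Indep (⨆ n, 𝓛 n) m𝓑 μ :=
    IndepSets.indep (iSup_le h𝓛m𝓑) le_rfl hp1 hp2 hgen1 hgen2 hindepSets
  intro A hA
  have hAB : MeasurableSet[m𝓑] A := (iSup_le h𝓛m𝓑) A hA
  have hself : μ (A ∩ A) = μ A * μ A := (Indep_iff _ _ _).mp hindep A A hA hAB
  rw [Set.inter_self] at hself
  rcases eq_or_ne (μ A) 0 with h0 | h0
  · exact Or.inl h0
  · right
    have : μ A * 1 = μ A * μ A := by rw [mul_one]; exact hself
    exact ((ENNReal.mul_right_inj h0 (measure_ne_top μ A)).mp this).symm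
end

section
/- Let μ be a regular conditional distribution for P given 𝓐 with 𝓑 countably generated, and let σ(μ) ⊂ 𝓐 be the σ-field generated by the maps ω ↦ μ(ω)(B), B ∈ 𝓑. Then σ(μ) is countably generated and there exists T ∈ 𝓐 with P(T) = 1 such that for every ω ∈ T, every C ∈ 𝓑, and every bounded σ(μ)-measurable h : Ω → ℝ, ∫_C h(x) μ(ω)(dx) = h(ω) μ(ω)(C). -/
open MeasureTheory MeasurableSpace Set Filter
open scoped ENNReal

/-! The maps `ω ↦ μ ω B` determine `μ` as a measure-valued map, and for probability measures it
suffices to know them for `B` in a countable π-system generating `𝓑`; hence `σ(μ)` is the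
pullback of the Giry σ-field along `μ` and is generated by countably many sets `S ⊆ 𝓐`.
For `A ∈ 𝓐` the defining property of `μ` with `B = A` gives `μ ω A = 1_A(ω)` for a.e. `ω`, so
this holds simultaneously for all `A ∈ S` on an `𝓐`-measurable set `T` of full measure. For
`ω ∈ T` it then holds for every `A ∈ σ(μ)`, so every `σ(μ)`-measurable `h` is `μ ω`-a.e. equal to
the constant `h ω`. -/

theorem Set.Countable.generatePiSystem {α : Type*} {S : Set (Set α)} (hS : S.Countable) :
    (generatePiSystem S).Countable := by
  refine ((countable_ofPred_finite_subset hS).image sInter).mono fun t ht => ?_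
  induction ht with
  | base hs => exact ⟨{_}, ⟨finite_singleton _, singleton_subset_iff.2 hs⟩, sInter_singleton _⟩
  | inter _ _ _ ihs iht =>
    obtain ⟨u, ⟨huf, huS⟩, rfl⟩ := ihs
    obtain ⟨v, ⟨hvf, hvS⟩, rfl⟩ := iht
    exact ⟨u ∪ v, ⟨huf.union hvf, union_subset huS hvS⟩, sInter_union u v⟩

theorem MeasurableSpace.CountablyGenerated.iSup {β ι : Type*} [Countable ι]
    {m : ι → MeasurableSpace β} (h : ∀ i, @CountablyGenerated β (m i)) :
    @CountablyGenerated β (⨆ i, m i) := by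
  choose g hgc hg using fun i => (h i).isCountablyGenerated
  refine @CountablyGenerated.mk β (⨆ i, m i) ⟨⋃ i, g i, countable_iUnion hgc, ?_⟩
  rw [← iSup_generateFrom]
  exact iSup_congr hg

section MeasureValued

variable {α β : Type*} [mα : MeasurableSpace α]

theorem iSup_comap_measure_apply_eq_comap (μ : β → Measure α) :
    ⨆ s ∈ {s : Set α | MeasurableSet s}, MeasurableSpace.comap (fun b => μ b s) inferInstance =
      MeasurableSpace.comap μ inferInstance := by
  simp only [Measure.instMeasurableSpace, MeasurableSpace.comap_iSup, MeasurableSpace.comap_comp]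
  rfl

theorem comap_measure_eq_iSup_comap_of_isPiSystem (μ : β → Measure α)
    [∀ b, IsProbabilityMeasure (μ b)] {S : Set (Set α)} (hgen : mα = generateFrom S)
    (hpi : IsPiSystem S) :
    MeasurableSpace.comap μ inferInstance =
      ⨆ s : S, MeasurableSpace.comap (fun b => μ b s) inferInstance := by
  refine le_antisymm ?_ (iSup_le fun s => ?_)
  · exact (Measurable.measure_of_isPiSystem_of_isProbabilityMeasure
      (mα := ⨆ s : S, MeasurableSpace.comap (fun b => μ b s) inferInstance) hgen hpi
      fun s hs => .of_comap_le <| le_iSup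
        (fun s : S => MeasurableSpace.comap (fun b => μ b s) inferInstance) ⟨s, hs⟩).comap_le
  · exact ((Measure.measurable_coe (hgen ▸ measurableSet_generateFrom s.2)).comp
      (comap_measurable μ)).comap_le

theorem countablyGenerated_comap_measure [CountablyGenerated α] (μ : β → Measure α)
    [∀ b, IsProbabilityMeasure (μ b)] :
    @CountablyGenerated β (MeasurableSpace.comap μ inferInstance) := by
  have : Countable (generatePiSystem (countableGeneratingSet α)) :=
    countable_countableGeneratingSet.generatePiSystem.to_subtype
  rw [comap_measure_eq_iSup_comap_of_isPiSystem μ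
    (by rw [generateFrom_generatePiSystem_eq, generateFrom_countableGeneratingSet])
    (isPiSystem_generatePiSystem _)]
  exact .iSup fun _ => .comap _

end MeasureValued

theorem measure_eq_indicator_of_measurableSet_generateFrom {α : Type*} {mα : MeasurableSpace α}
    {ν : Measure α} [IsProbabilityMeasure ν] {x : α} {S : Set (Set α)}
    (hS : ∀ s ∈ S, MeasurableSet s) (h : ∀ s ∈ S, ν s = s.indicator 1 x) {A : Set α}
    (hA : MeasurableSet[generateFrom S] A) : ν A = A.indicator 1 x := by
  -- The sets on which `ν` agrees with `dirac x` form a σ-algebra, not only a Dynkin system.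
  suffices MeasurableSet A ∧ ν A = A.indicator 1 x from this.2
  induction A, hA using generateFrom_induction with
  | hC s hs => exact ⟨hS s hs, h s hs⟩
  | empty => simp
  | compl s _ ih =>
    refine ⟨ih.1.compl, ?_⟩
    rw [prob_compl_eq_one_sub ih.1, ih.2]
    by_cases hx : x ∈ s <;> simp [hx]
  | iUnion s _ ih =>
    refine ⟨.iUnion fun n => (ih n).1, ?_⟩
    by_cases hx : ∃ n, x ∈ s n
    · obtain ⟨n, hn⟩ := hx
      rw [indicator_of_mem (mem_iUnion.2 ⟨n, hn⟩)]
      refine le_antisymm prob_le_one ?_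
      calc (1 : ℝ≥0∞) = ν (s n) := by rw [(ih n).2, indicator_of_mem hn, Pi.one_apply]
        _ ≤ ν (⋃ i, s i) := measure_mono (subset_iUnion s n)
    · rw [not_exists] at hx
      rw [indicator_of_notMem (by simpa using hx)]
      exact measure_iUnion_null fun n => by rw [(ih n).2, indicator_of_notMem (hx n)]

theorem setIntegral_eq_mul_of_measure_eq_indicator {α : Type*} {m m0 : MeasurableSpace α}
    {ν : Measure α} {x : α} (hν : ∀ A, MeasurableSet[m] A → ν A = A.indicator 1 x)
    {f : α → ℝ} (hf : Measurable[m] f) (C : Set α) : ∫ y in C, f y ∂ν = f x * ν.real C := by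
  have hae : f =ᵐ[ν] fun _ => f x := by
    change ν (f ⁻¹' {f x})ᶜ = 0
    rw [hν _ (hf (measurableSet_singleton (f x))).compl, indicator_of_notMem (by simp)]
  rw [integral_congr_ae (ae_restrict_of_ae hae), setIntegral_const, smul_eq_mul, mul_comm]

theorem IsRCD.apply_ae_eq_indicator {Ω : Type*} {𝓐 m𝓑 : MeasurableSpace Ω} {P : Measure Ω}
    [IsFiniteMeasure P] {μ : Ω → Measure Ω} (hμ : IsRCD 𝓐 P μ) (h𝓐 : 𝓐 ≤ m𝓑) {A : Set Ω}
    (hA : MeasurableSet[𝓐] A) : (fun ω => μ ω A) =ᵐ[P] A.indicator 1 := by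
  obtain ⟨-, hmeas, hint⟩ := hμ
  have hA' : MeasurableSet[m𝓑] A := h𝓐 A hA
  have hind : Measurable[𝓐] (A.indicator (1 : Ω → ℝ≥0∞)) := measurable_const.indicator hA
  refine ae_eq_of_ae_eq_trim (hm := h𝓐) <| ae_eq_of_forall_setLIntegral_eq_of_sigmaFinite
    (hmeas A hA') (hind) fun s hs _ => ?_
  rw [restrict_trim h𝓐 P hs, lintegral_trim h𝓐 (hmeas A hA'),
    lintegral_trim h𝓐 (hind), hint A hA' s hs,
    lintegral_indicator_one hA', Measure.restrict_apply hA', inter_comm]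

/-- σ(μ) ⊂ 𝓐 is countably generated, and a.s. every bounded
σ(μ)-measurable h satisfies ∫_C h dμ(ω) = h(ω) μ(ω)(C). -/
theorem stmt_16 {Ω : Type*} [m𝓑 : MeasurableSpace Ω] [CountablyGenerated Ω]
    (P : @Measure Ω m𝓑) (hP : IsProbabilityMeasure P)
    (𝓐 : MeasurableSpace Ω) (h𝓐 : 𝓐 ≤ m𝓑)
    (μ : Ω → @Measure Ω m𝓑) (hμ : @IsRCD Ω m𝓑 𝓐 P μ)
    (σμ : MeasurableSpace Ω)
    (hσμ : σμ = ⨆ B ∈ {B : Set Ω | MeasurableSet[m𝓑] B},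
      MeasurableSpace.comap (fun ω => μ ω B) inferInstance) :
    σμ ≤ 𝓐 ∧ (∃ S : Set (Set Ω), S.Countable ∧ σμ = MeasurableSpace.generateFrom S) ∧
      ∃ T : Set Ω, MeasurableSet[𝓐] T ∧ P T = 1 ∧
        ∀ ω ∈ T, ∀ C : Set Ω, MeasurableSet[m𝓑] C → ∀ h : Ω → ℝ,
          Measurable[σμ] h → (∃ M : ℝ, ∀ x, |h x| ≤ M) →
            ∫ x in C, h x ∂(μ ω) = h ω * (μ ω C).toReal := by
  have := hμ.1
  rw [iSup_comap_measure_apply_eq_comap (mα := m𝓑)] at hσμ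
  have hσμ𝓐 : σμ ≤ 𝓐 := hσμ ▸ (Measure.measurable_of_measurable_coe μ hμ.2.1).comap_le
  obtain ⟨S, hSc, hSgen⟩ :=
    (hσμ ▸ countablyGenerated_comap_measure (mα := m𝓑) μ).isCountablyGenerated
  have hS𝓐 : ∀ s ∈ S, MeasurableSet[𝓐] s :=
    fun s hs => hσμ𝓐 s (hSgen ▸ measurableSet_generateFrom hs)
  set T : Set Ω := ⋂ s ∈ S, {ω | μ ω s = s.indicator 1 ω}
  have hT : MeasurableSet[𝓐] T := .biInter hSc fun s hs =>
    measurableSet_eq_fun (hμ.2.1 s (h𝓐 s (hS𝓐 s hs))) (measurable_const.indicator (hS𝓐 s hs))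
  have hT_ae : ∀ᵐ ω ∂P, ω ∈ T := by
    simp only [T, mem_iInter₂]
    exact (ae_ball_iff hSc).2 fun s hs => hμ.apply_ae_eq_indicator h𝓐 (hS𝓐 s hs)
  refine ⟨hσμ𝓐, ⟨S, hSc, hSgen⟩, T, hT, (prob_compl_eq_zero_iff (h𝓐 T hT)).1 hT_ae,
    fun ω hω C _ h hh _ => ?_⟩
  refine setIntegral_eq_mul_of_measure_eq_indicator (m0 := m𝓑) (fun A hA => ?_) hh C
  exact measure_eq_indicator_of_measurableSet_generateFrom (fun s hs => h𝓐 s (hS𝓐 s hs))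
    (mem_iInter₂.1 hω) (hSgen ▸ hA)
end
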